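/- Let B ∈ ℝ^{n×d} be (s', c)-RIP and let v ∈ ℝ^d satisfy NS(v) ≤ σ with √(σ/s')·c² ≤ 1/2. Then ‖Bv‖₂ ≥ ((1/c) − c·√(σ/s'))·‖v‖₂, where in particular the right-hand side is at least ‖v‖₂/(2c). -/

import Mathlib

/-!
Split `v` into shells of `s' / 2` coordinates each, in decreasing order of magnitude. Two shells
together are `s'`-sparse, so RIP applied to `‖y‖ x ± ‖x‖ y` shows that `B` almost preserves the
orthogonality of distinct shells: `|⟪B x, B y⟫| ≤ μ ‖x‖ ‖y‖` with `μ = (c - c⁻¹) / 2`. Expanding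
`‖B v‖²` over pairs of shells then gives `‖B v‖² ≥ (c + c⁻¹) / 2 ‖v‖² - μ (∑ₗ ‖v⁽ˡ⁾‖)²`. (The
triangle inequality over the shells alone is too weak: at `c = 1` it only gives
`‖B v‖ ≥ (1 - 2 √(σ / s')) ‖v‖`.) Every coordinate of a shell is
at most the average of the previous shell, whence `∑ₗ ‖v⁽ˡ⁾‖ ≤ ‖v‖ + ‖v‖₁ / √(s' / 2)`, which
numerical sparsity bounds by `(1 + 7/4 √(σ / s')) ‖v‖`. What remains is a polynomial inequality
in `c` and `√(σ / s')`.
-/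

open Classical Finset Matrix

variable {ι m : Type*}

section DotProduct

variable [Fintype ι]

lemma dotProduct_self_nonneg {R : Type*} [Ring R] [LinearOrder R] [IsStrictOrderedRing R]
    (w : ι → R) : 0 ≤ w ⬝ᵥ w :=
  sum_nonneg fun j _ => mul_self_nonneg (w j)

lemma smul_add_smul_dotProduct_self {R : Type*} [CommRing R] (a b : R) (x y : ι → R) :
    (a • x + b • y) ⬝ᵥ (a • x + b • y) =
      a ^ 2 * (x ⬝ᵥ x) + 2 * a * b * (x ⬝ᵥ y) + b ^ 2 * (y ⬝ᵥ y) := by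
  simp only [add_dotProduct, dotProduct_add, smul_dotProduct, dotProduct_smul, smul_eq_mul,
    dotProduct_comm y x]
  ring

lemma dotProduct_self_le_sq_sum_abs (v : ι → ℝ) : v ⬝ᵥ v ≤ (∑ j, |v j|) ^ 2 := by
  simpa [dotProduct, ← sq, sq_abs] using
    sum_sq_le_sq_sum_of_nonneg (s := univ) fun j _ => abs_nonneg (v j)

lemma card_support_smul_add_smul_le (a b : ℝ) (x y : ι → ℝ) :
    #{j | (a • x + b • y) j ≠ 0} ≤ #{j | x j ≠ 0} + #{j | y j ≠ 0} := by
  refine (card_le_card fun j hj => ?_).trans (card_union_le _ _)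
  simp only [mem_filter, mem_univ, true_and, mem_union, Pi.add_apply, Pi.smul_apply,
    smul_eq_mul] at hj ⊢
  by_contra! h
  simp [h.1, h.2] at hj

end DotProduct

section RIP

variable [Fintype ι] [Fintype m]

def IsRIP (B : Matrix m ι ℝ) (s : ℕ) (c : ℝ) : Prop :=
  ∀ w : ι → ℝ, #{j | w j ≠ 0} ≤ s →
    c⁻¹ * (w ⬝ᵥ w) ≤ B *ᵥ w ⬝ᵥ B *ᵥ w ∧ B *ᵥ w ⬝ᵥ B *ᵥ w ≤ c * (w ⬝ᵥ w)

lemma IsRIP.one_le [Nonempty ι] {B : Matrix m ι ℝ} {s : ℕ} {c : ℝ}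
    (hB : IsRIP B s c) (hs : 0 < s) (hc : 0 < c) : 1 ≤ c := by
  obtain ⟨j₀⟩ := ‹Nonempty ι›
  set w : ι → ℝ := Pi.single j₀ 1
  have hsupp : #{j | w j ≠ 0} ≤ s :=
    (card_le_one.2 fun a ha b hb => by simp_all [w, Pi.single_apply]).trans hs
  obtain ⟨hlow, hup⟩ := hB w hsupp
  have h1 : w ⬝ᵥ w = 1 := by simp [w]
  rw [h1, mul_one] at hlow hup
  have := (inv_le_iff_one_le_mul₀ hc).1 (hlow.trans hup)
  nlinarith

lemma IsRIP.abs_mulVec_dotProduct_le {B : Matrix m ι ℝ} {s : ℕ} {c : ℝ} (hB : IsRIP B s c)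
    {x y : ι → ℝ} (hs : #{j | x j ≠ 0} + #{j | y j ≠ 0} ≤ s) (hxy : ∀ j, x j = 0 ∨ y j = 0) :
    |B *ᵥ x ⬝ᵥ B *ᵥ y| ≤ (c - c⁻¹) / 2 * (√(x ⬝ᵥ x) * √(y ⬝ᵥ y)) := by
  set X := √(x ⬝ᵥ x)
  set Y := √(y ⬝ᵥ y)
  have hX : X ^ 2 = x ⬝ᵥ x := Real.sq_sqrt (dotProduct_self_nonneg x)
  have hY : Y ^ 2 = y ⬝ᵥ y := Real.sq_sqrt (dotProduct_self_nonneg y)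
  have horth : x ⬝ᵥ y = 0 := sum_eq_zero fun j _ => by rcases hxy j with h | h <;> simp [h]
  set Pxx := B *ᵥ x ⬝ᵥ B *ᵥ x
  set Pyy := B *ᵥ y ⬝ᵥ B *ᵥ y
  set p := B *ᵥ x ⬝ᵥ B *ᵥ y
  have hrip : ∀ a b : ℝ,
      c⁻¹ * (a ^ 2 * X ^ 2 + b ^ 2 * Y ^ 2) ≤ a ^ 2 * Pxx + 2 * a * b * p + b ^ 2 * Pyy ∧
      a ^ 2 * Pxx + 2 * a * b * p + b ^ 2 * Pyy ≤ c * (a ^ 2 * X ^ 2 + b ^ 2 * Y ^ 2) := by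
    intro a b
    have hw := hB (a • x + b • y) ((card_support_smul_add_smul_le a b x y).trans hs)
    rwa [mulVec_add, mulVec_smul, mulVec_smul, smul_add_smul_dotProduct_self,
      smul_add_smul_dotProduct_self, horth, mul_zero, add_zero, ← hX, ← hY] at hw
  rcases (mul_nonneg (Real.sqrt_nonneg _) (Real.sqrt_nonneg _) : 0 ≤ X * Y).eq_or_lt with h0 | hpos
  · have hxy0 : x = 0 ∨ y = 0 := by
      simpa [X, Y, Real.sqrt_eq_zero (dotProduct_self_nonneg _), dotProduct_self_eq_zero]
        using h0.symm
    rw [← h0, mul_zero, abs_nonpos_iff]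
    rcases hxy0 with rfl | rfl <;> simp [p]
  -- RIP for `Y • x ± X • y`, whose squared norm is `2 X² Y²`
  obtain ⟨hp₁, hp₂⟩ := hrip Y X
  obtain ⟨hm₁, hm₂⟩ := hrip Y (-X)
  rw [abs_le]
  constructor <;> nlinarith

lemma IsRIP.le_dotProduct_mulVec_sum {κ : Type*} {B : Matrix m ι ℝ} {s s₀ : ℕ} {c : ℝ}
    (hB : IsRIP B s c) (hs₀ : 2 * s₀ ≤ s) {x : κ → ι → ℝ} (hx : ∀ l, #{j | x l j ≠ 0} ≤ s₀)
    (hdisj : Pairwise fun l l' => ∀ j, x l j = 0 ∨ x l' j = 0) (L : Finset κ) :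
    (c + c⁻¹) / 2 * ((∑ l ∈ L, x l) ⬝ᵥ ∑ l ∈ L, x l)
        - (c - c⁻¹) / 2 * (∑ l ∈ L, √(x l ⬝ᵥ x l)) ^ 2
      ≤ B *ᵥ (∑ l ∈ L, x l) ⬝ᵥ B *ᵥ ∑ l ∈ L, x l := by
  have hterm : ∀ l l', (c + c⁻¹) / 2 * (x l ⬝ᵥ x l')
      - (c - c⁻¹) / 2 * (√(x l ⬝ᵥ x l) * √(x l' ⬝ᵥ x l')) ≤ B *ᵥ x l ⬝ᵥ B *ᵥ x l' := by
    intro l l'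
    rcases eq_or_ne l l' with rfl | hne
    · have := (hB (x l) ((hx l).trans (by omega))).1
      rw [Real.mul_self_sqrt (dotProduct_self_nonneg _)]
      linarith
    · have horth : x l ⬝ᵥ x l' = 0 :=
        sum_eq_zero fun j _ => by rcases hdisj hne j with h | h <;> simp [h]
      have := hB.abs_mulVec_dotProduct_le (by linarith [hx l, hx l']) (hdisj hne)
      rw [horth, mul_zero, zero_sub]
      exact neg_le_of_abs_le this
  calc _ = ∑ l ∈ L, ∑ l' ∈ L, ((c + c⁻¹) / 2 * (x l ⬝ᵥ x l')
          - (c - c⁻¹) / 2 * (√(x l ⬝ᵥ x l) * √(x l' ⬝ᵥ x l'))) := by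
        simp only [sum_sub_distrib, ← mul_sum, sum_dotProduct, dotProduct_sum, sq, sum_mul_sum]
        rw [sum_comm]
    _ ≤ ∑ l ∈ L, ∑ l' ∈ L, B *ᵥ x l ⬝ᵥ B *ᵥ x l' :=
        sum_le_sum fun l _ => sum_le_sum fun l' _ => hterm l l'
    _ = _ := by
        simp only [mulVec_sum, sum_dotProduct, dotProduct_sum]
        exact sum_comm

end RIP

section Shells

variable {n : ℕ} (r : ι ≃ Fin n) (s : ℕ) (u : ι → ℝ)

/-- `r` ranks the coordinates; when it ranks them by decreasing `|u j|`, `shell r s u 0` is the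
vector `v⁽¹⁾` of the shelling decomposition. -/
def shell (l : ℕ) : ι → ℝ :=
  fun j => if (r j : ℕ) / s = l then u j else 0

lemma sum_range_shell {K : ℕ} (hK : n ≤ K) : ∑ l ∈ range K, shell r s u l = u := by
  funext j
  simp only [Finset.sum_apply, shell, sum_ite_eq, mem_range]
  exact if_pos ((Nat.div_le_self _ _).trans_lt ((r j).isLt.trans_le hK))

lemma sum_range_abs_shell_le (K : ℕ) (j : ι) : ∑ l ∈ range K, |shell r s u l j| ≤ |u j| := by
  simp only [shell, apply_ite abs, abs_zero, sum_ite_eq]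
  split_ifs <;> simp

lemma shell_eq_zero_or_eq_zero {l l' : ℕ} (hne : l ≠ l') (j : ι) :
    shell r s u l j = 0 ∨ shell r s u l' j = 0 := by
  by_cases h : (r j : ℕ) / s = l
  · exact Or.inr (if_neg (h ▸ hne))
  · exact Or.inl (if_neg h)

variable [Fintype ι] {s}

lemma card_rank_div_eq_le (hs : 0 < s) (l : ℕ) : #{j | (r j : ℕ) / s = l} ≤ s := by
  calc #{j | (r j : ℕ) / s = l} ≤ #(Ico (l * s) (l * s + s)) := by
        refine card_le_card_of_injOn (fun j => (r j : ℕ)) (fun j hj => ?_) ?_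
        · simp only [coe_filter, mem_univ, true_and, Set.mem_ofPred_eq, Nat.div_eq_iff hs] at hj
          simp only [coe_Ico, Set.mem_Ico]
          omega
        · exact fun j _ k _ h => r.injective (Fin.ext h)
    _ = s := by simp

lemma card_support_shell_le (hs : 0 < s) (l : ℕ) : #{j | shell r s u l j ≠ 0} ≤ s := by
  refine (card_le_card fun j hj => ?_).trans (card_rank_div_eq_le r hs l)
  simp only [mem_filter, mem_univ, true_and] at hj ⊢
  by_contra h
  exact hj (if_neg h)

variable {u}

lemma mul_abs_le_sum_abs_shell (hr : ∀ j k, r j < r k → |u k| ≤ |u j|) (hs : 0 < s) {l : ℕ}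
    {k : ι} (hk : (r k : ℕ) / s = l + 1) : s * |u k| ≤ ∑ j, |shell r s u l j| := by
  rw [Nat.div_eq_iff hs, add_one_mul] at hk
  -- shell `l` is full, since the rank `r k` lies beyond it
  have hcard : s ≤ #{j | (r j : ℕ) / s = l} := by
    calc s = #(Ico (l * s) (l * s + s)) := by simp
      _ ≤ _ := by
        refine card_le_card_of_surjOn (fun j => (r j : ℕ)) fun i hi => ?_
        simp only [coe_Ico, Set.mem_Ico] at hi
        have hin : i < n := by have := (r k).isLt; omega
        refine ⟨r.symm ⟨i, hin⟩, ?_, by simp⟩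
        simp only [coe_filter, mem_univ, true_and, Set.mem_ofPred_eq, Equiv.apply_symm_apply,
          Nat.div_eq_iff hs]
        omega
  have hle : ∀ j ∈ ({j | (r j : ℕ) / s = l} : Finset ι), |u k| ≤ |u j| := by
    intro j hj
    simp only [mem_filter, mem_univ, true_and, Nat.div_eq_iff hs] at hj
    exact hr j k (by rw [Fin.lt_def]; omega)
  calc (s : ℝ) * |u k| ≤ #{j | (r j : ℕ) / s = l} * |u k| := by gcongr
    _ ≤ ∑ j ∈ {j | (r j : ℕ) / s = l}, |u j| := by
        simpa only [nsmul_eq_mul] using card_nsmul_le_sum _ _ _ hle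
    _ = ∑ j, |shell r s u l j| := by
        simp only [sum_filter, shell, apply_ite abs, abs_zero]

lemma mul_dotProduct_shell_succ_le (hr : ∀ j k, r j < r k → |u k| ≤ |u j|) (hs : 0 < s) (l : ℕ) :
    s * (shell r s u (l + 1) ⬝ᵥ shell r s u (l + 1)) ≤ (∑ j, |shell r s u l j|) ^ 2 := by
  set A := ∑ j, |shell r s u l j|
  have hsR : (0 : ℝ) < s := by exact_mod_cast hs
  have hpoint : ∀ k, (s : ℝ) ^ 2 * (shell r s u (l + 1) k * shell r s u (l + 1) k)
      ≤ if (r k : ℕ) / s = l + 1 then A ^ 2 else 0 := by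
    intro k
    unfold shell
    split_ifs with hk
    · have h := mul_abs_le_sum_abs_shell r hr hs hk
      have : (s : ℝ) * |u k| ≥ 0 := by positivity
      nlinarith [abs_mul_abs_self (u k)]
    · simp
  have hsum : (s : ℝ) ^ 2 * (shell r s u (l + 1) ⬝ᵥ shell r s u (l + 1)) ≤ s * A ^ 2 :=
    calc _ = ∑ k, (s : ℝ) ^ 2 * (shell r s u (l + 1) k * shell r s u (l + 1) k) := mul_sum _ _ _
      _ ≤ ∑ k, if (r k : ℕ) / s = l + 1 then A ^ 2 else 0 := sum_le_sum fun k _ => hpoint k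
      _ = #{k | (r k : ℕ) / s = l + 1} * A ^ 2 := by rw [← sum_filter, sum_const, nsmul_eq_mul]
      _ ≤ s * A ^ 2 := by gcongr; exact_mod_cast card_rank_div_eq_le r hs _
  nlinarith

lemma sqrt_mul_sum_sqrt_dotProduct_shell_le (hr : ∀ j k, r j < r k → |u k| ≤ |u j|) (hs : 0 < s)
    (K : ℕ) :
    √s * ∑ l ∈ range (K + 1), √(shell r s u l ⬝ᵥ shell r s u l)
      ≤ √s * √(u ⬝ᵥ u) + ∑ j, |u j| := by
  have hhead : √(shell r s u 0 ⬝ᵥ shell r s u 0) ≤ √(u ⬝ᵥ u) :=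
    Real.sqrt_le_sqrt <| sum_le_sum fun j _ => by
      unfold shell; split_ifs <;> simp [mul_self_nonneg]
  have htail : ∀ l, √s * √(shell r s u (l + 1) ⬝ᵥ shell r s u (l + 1)) ≤ ∑ j, |shell r s u l j| :=
    fun l => by
      rw [← Real.sqrt_mul (Nat.cast_nonneg s)]
      exact Real.sqrt_le_iff.2 ⟨sum_nonneg fun j _ => abs_nonneg _,
        mul_dotProduct_shell_succ_le r hr hs l⟩
  have hl1 : ∑ l ∈ range K, ∑ j, |shell r s u l j| ≤ ∑ j, |u j| := by
    rw [sum_comm]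
    exact sum_le_sum fun j _ => sum_range_abs_shell_le r s u K j
  rw [sum_range_succ', mul_add, mul_sum]
  have := sum_le_sum fun l (_ : l ∈ range K) => htail l
  have : 0 ≤ √(s : ℝ) := Real.sqrt_nonneg _
  nlinarith

end Shells

lemma exists_equiv_fin_antitone {α : Type*} [Fintype ι] [LinearOrder α] (f : ι → α) :
    ∃ r : ι ≃ Fin (Fintype.card ι), ∀ j k, r j ≤ r k → f k ≤ f j := by
  set e := Fintype.equivFin ι
  set g : Fin (Fintype.card ι) → αᵒᵈ := fun i => OrderDual.toDual (f (e.symm i))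
  refine ⟨e.trans (Tuple.sort g).symm, fun j k hjk => ?_⟩
  simpa [g] using Tuple.monotone_sort g hjk

lemma exists_shelling [Fintype ι] (u : ι → ℝ) {s : ℕ} (hs : 0 < s) :
    ∃ (K : ℕ) (x : ℕ → ι → ℝ), ∑ l ∈ range K, x l = u ∧ (∀ l, #{j | x l j ≠ 0} ≤ s) ∧
      (Pairwise fun l l' => ∀ j, x l j = 0 ∨ x l' j = 0) ∧
      √s * ∑ l ∈ range K, √(x l ⬝ᵥ x l) ≤ √s * √(u ⬝ᵥ u) + ∑ j, |u j| := by
  obtain ⟨r, hr⟩ := exists_equiv_fin_antitone fun j => |u j|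
  exact ⟨_, shell r s u, sum_range_shell r s u (Nat.le_succ _), card_support_shell_le r u hs,
    fun _ _ hne => shell_eq_zero_or_eq_zero r s u hne,
    sqrt_mul_sum_sqrt_dotProduct_shell_le r (fun j k h => hr j k h.le) hs _⟩

lemma sq_inv_sub_mul_le {c t : ℝ} (hc : 1 ≤ c) (ht : 0 ≤ t) (htc : t * c ^ 2 ≤ 1 / 2) :
    (c⁻¹ - c * t) ^ 2 ≤ (c + c⁻¹) / 2 - (c - c⁻¹) / 2 * (1 + 7 / 4 * t) ^ 2 := by
  have h : 0 ≤ 1 - 2 * t * c ^ 2 := by linarith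
  -- the claim multiplied by `32 c²`
  have hpoly : 32 * (1 - c ^ 2 * t) ^ 2
      ≤ 32 * c - 56 * t * (c ^ 3 - c) - 49 * t ^ 2 * (c ^ 3 - c) := by
    nlinarith [mul_nonneg ht h, mul_nonneg (sub_nonneg.2 hc) ht, sq_nonneg (c - 1),
      mul_nonneg (mul_nonneg ht ht) h, mul_nonneg (sub_nonneg.2 hc) (mul_nonneg ht h)]
  have hc0 : 0 < c := by linarith
  rw [← sub_nonneg]
  have : (c + c⁻¹) / 2 - (c - c⁻¹) / 2 * (1 + 7 / 4 * t) ^ 2 - (c⁻¹ - c * t) ^ 2 =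
      (32 * c - 56 * t * (c ^ 3 - c) - 49 * t ^ 2 * (c ^ 3 - c) - 32 * (1 - c ^ 2 * t) ^ 2)
        / (32 * c ^ 2) := by
    field_simp
    ring
  rw [this]
  exact div_nonneg (by linarith) (by positivity)

lemma one_le_of_sq_sum_abs_le [Fintype ι] {v : ι → ℝ} (hv : v ≠ 0) {σ : ℝ}
    (hNS : (∑ j, |v j|) ^ 2 ≤ σ * (v ⬝ᵥ v)) : 1 ≤ σ := by
  have hpos : 0 < v ⬝ᵥ v :=
    (dotProduct_self_nonneg v).lt_of_ne (Ne.symm (dotProduct_self_eq_zero.not.2 hv))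
  nlinarith [dotProduct_self_le_sq_sum_abs v]

lemma sum_abs_le_of_sq_sum_abs_le [Fintype ι] {v : ι → ℝ} {σ : ℝ}
    (hNS : (∑ j, |v j|) ^ 2 ≤ σ * (v ⬝ᵥ v)) : ∑ j, |v j| ≤ √σ * √(v ⬝ᵥ v) :=
  calc ∑ j, |v j| = √((∑ j, |v j|) ^ 2) :=
        (Real.sqrt_sq (sum_nonneg fun j _ => abs_nonneg (v j))).symm
    _ ≤ √(σ * (v ⬝ᵥ v)) := Real.sqrt_le_sqrt hNS
    _ = √σ * √(v ⬝ᵥ v) := Real.sqrt_mul' _ (dotProduct_self_nonneg v)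

theorem IsRIP.sq_mul_dotProduct_self_le [Fintype ι] [Fintype m] {B : Matrix m ι ℝ} {s : ℕ}
    {c σ : ℝ} (hB : IsRIP B s c) (hs : 0 < s) (hc : 0 < c) {v : ι → ℝ}
    (hNS : (∑ j, |v j|) ^ 2 ≤ σ * (v ⬝ᵥ v)) (hsmall : √(σ / s) * c ^ 2 ≤ 1 / 2) :
    (c⁻¹ - c * √(σ / s)) ^ 2 * (v ⬝ᵥ v) ≤ B *ᵥ v ⬝ᵥ B *ᵥ v := by
  rcases eq_or_ne v 0 with rfl | hv
  · simp
  set t := √(σ / s)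
  set V := √(v ⬝ᵥ v)
  have hσ : 1 ≤ σ := one_le_of_sq_sum_abs_le hv hNS
  have : Nonempty ι := (Function.ne_iff.1 hv).nonempty
  have hc1 : 1 ≤ c := hB.one_le hs hc
  have hs2 : 2 ≤ s := by
    by_contra h
    have ht : 1 ≤ t := by
      rw [show t = √σ by simp [t, show s = 1 by omega]]
      exact Real.one_le_sqrt.2 hσ
    nlinarith
  set s₀ := s / 2
  have hs₀ : 0 < s₀ := by omega
  obtain ⟨K, x, hsum, hsp, hdisj, hshell⟩ := exists_shelling v hs₀
  have hgram := hB.le_dotProduct_mulVec_sum (by omega : 2 * s₀ ≤ s) hsp hdisj (range K)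
  rw [hsum] at hgram
  set a := ∑ l ∈ range K, √(x l ⬝ᵥ x l)
  -- `σ ≤ 3 s₀ σ / s ≤ (7 / 4) ^ 2 s₀ σ / s`
  have hσs₀ : √σ ≤ √s₀ * (7 / 4 * t) := by
    have hsR : (0 : ℝ) < s := by exact_mod_cast hs
    have hs₀R : (s : ℝ) ≤ 3 * s₀ := by exact_mod_cast (by omega : s ≤ 3 * s₀)
    have : σ ≤ s₀ * ((7 / 4) ^ 2 * (σ / s)) := by
      rw [mul_div_assoc', mul_div_assoc', le_div_iff₀ hsR]
      nlinarith
    calc √σ ≤ √(s₀ * ((7 / 4) ^ 2 * (σ / s))) := Real.sqrt_le_sqrt this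
      _ = √s₀ * (7 / 4 * t) := by
        rw [Real.sqrt_mul (Nat.cast_nonneg _), Real.sqrt_mul (by norm_num),
          Real.sqrt_sq (by norm_num)]
  have ha : a ≤ (1 + 7 / 4 * t) * V := by
    have hs₀pos : 0 < √(s₀ : ℝ) := Real.sqrt_pos.2 (by exact_mod_cast hs₀)
    have hl1 := sum_abs_le_of_sq_sum_abs_le hNS
    have := mul_le_mul_of_nonneg_right hσs₀ (Real.sqrt_nonneg (v ⬝ᵥ v))
    nlinarith
  have hμ : 0 ≤ (c - c⁻¹) / 2 := by
    have := inv_le_one_of_one_le₀ hc1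
    linarith
  have ha2 : a ^ 2 ≤ ((1 + 7 / 4 * t) * V) ^ 2 :=
    pow_le_pow_left₀ (sum_nonneg fun l _ => Real.sqrt_nonneg _) ha 2
  calc (c⁻¹ - c * t) ^ 2 * (v ⬝ᵥ v)
      ≤ ((c + c⁻¹) / 2 - (c - c⁻¹) / 2 * (1 + 7 / 4 * t) ^ 2) * (v ⬝ᵥ v) :=
        mul_le_mul_of_nonneg_right (sq_inv_sub_mul_le hc1 (Real.sqrt_nonneg _) hsmall)
          (dotProduct_self_nonneg v)
    _ ≤ (c + c⁻¹) / 2 * (v ⬝ᵥ v) - (c - c⁻¹) / 2 * a ^ 2 := by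
        rw [← Real.sq_sqrt (dotProduct_self_nonneg v)]
        nlinarith [mul_le_mul_of_nonneg_left ha2 hμ]
    _ ≤ _ := hgram

theorem rip_numerically_sparse_lower_general {n d s' : ℕ} (hs' : 0 < s') (c σ : ℝ)
    (hc : 0 < c) (B : Matrix (Fin n) (Fin d) ℝ)
    (hRIP : ∀ w : Fin d → ℝ, (Finset.univ.filter fun j => w j ≠ 0).card ≤ s' →
      (1 / c) * ∑ j, w j ^ 2 ≤ ∑ i, (B.mulVec w i) ^ 2 ∧
      ∑ i, (B.mulVec w i) ^ 2 ≤ c * ∑ j, w j ^ 2)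
    (v : Fin d → ℝ) (hNS : (∑ j, |v j|) ^ 2 ≤ σ * ∑ j, v j ^ 2)
    (hsmall : Real.sqrt (σ / s') * c ^ 2 ≤ 1 / 2) :
    (1 / c - c * Real.sqrt (σ / s')) * Real.sqrt (∑ j, v j ^ 2) ≤
        Real.sqrt (∑ i, (B.mulVec v i) ^ 2) ∧
    Real.sqrt (∑ j, v j ^ 2) / (2 * c) ≤
        (1 / c - c * Real.sqrt (σ / s')) * Real.sqrt (∑ j, v j ^ 2) := by
  have hsq : ∀ {k : ℕ} (w : Fin k → ℝ), ∑ j, w j ^ 2 = w ⬝ᵥ w := fun w => by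
    simp only [dotProduct, sq]
  have hB : IsRIP B s' c := fun w hw => by simpa only [hsq, one_div] using hRIP w hw
  rw [hsq] at hNS
  simp only [hsq, one_div]
  refine ⟨?_, ?_⟩
  · refine (le_abs_self _).trans (Real.abs_le_sqrt ?_)
    rw [mul_pow, Real.sq_sqrt (dotProduct_self_nonneg v)]
    exact hB.sq_mul_dotProduct_self_le hs' hc hNS hsmall
  · have hct : c * √(σ / s') ≤ (2 * c)⁻¹ := by
      rw [← one_div, le_div_iff₀ (by positivity)]
      linarith
    calc √(v ⬝ᵥ v) / (2 * c) = (c⁻¹ - (2 * c)⁻¹) * √(v ⬝ᵥ v) := by field_simp; ring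
      _ ≤ _ := by gcongr

/-- If `B` is `(s', c)`-RIP, `NS(v) ≤ σ`, and `√(σ/s')·c² ≤ 1/2`, then
`‖Bv‖₂ ≥ (1/c − c√(σ/s'))‖v‖₂`, and the right-hand side is at least `‖v‖₂/(2c)`. -/
theorem rip_numerically_sparse_lower {n d s' : ℕ} (hs' : 0 < s') (c σ : ℝ)
    (hc : 0 < c) (hσ : 0 ≤ σ) (B : Matrix (Fin n) (Fin d) ℝ)
    (hRIP : ∀ w : Fin d → ℝ, (Finset.univ.filter fun j => w j ≠ 0).card ≤ s' →
      (1 / c) * ∑ j, w j ^ 2 ≤ ∑ i, (B.mulVec w i) ^ 2 ∧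
      ∑ i, (B.mulVec w i) ^ 2 ≤ c * ∑ j, w j ^ 2)
    (v : Fin d → ℝ) (hNS : (∑ j, |v j|) ^ 2 ≤ σ * ∑ j, v j ^ 2)
    (hsmall : Real.sqrt (σ / s') * c ^ 2 ≤ 1 / 2) :
    (1 / c - c * Real.sqrt (σ / s')) * Real.sqrt (∑ j, v j ^ 2) ≤
        Real.sqrt (∑ i, (B.mulVec v i) ^ 2) ∧
    Real.sqrt (∑ j, v j ^ 2) / (2 * c) ≤
        (1 / c - c * Real.sqrt (σ / s')) * Real.sqrt (∑ j, v j ^ 2) :=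
  rip_numerically_sparse_lower_general hs' c σ hc B hRIP v hNS hsmall
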